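/- arXiv:1101.5785 — 2 statements merged into one kernel-verified Lean document; each statement's English description precedes it below -/
import Mathlib

section
/- Let x ∈ ℝ^N be a random vector, Φ an M×N matrix, K ⊂ {1,…,N}, and ‖·‖_X a norm. If there exists a decoder Δ with Φ(Δ(Φx)) = Φx such that E‖η‖_X ≤ (C₀/2)·E‖η − η_K‖_X where η = x − Δ(Φx), then the decoder Δ'(y) = argmin_{z : Φz = y} ‖z − z_K‖_X satisfies the instance optimality in expectation E‖x − Δ'(Φx)‖_X ≤ C₀·E‖x − x_K‖_X. -/
open Matrix MeasureTheory

/-!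
Write `η = x - Δ (Φ x)`. Since `η - η_K = (x - x_K) - (Δ (Φ x) - Δ (Φ x)_K)` and `x` is itself a
feasible point of the minimisation defining `Δ (Φ x)`, the triangle inequality gives
`‖η - η_K‖ ≤ 2 ‖x - x_K‖` pointwise. Taking expectations and inserting this into the null space
property with constant `C₀ / 2` yields instance optimality with constant `C₀`.
-/

/-- Restriction of a vector to an index set `K` (zero outside `K`). -/
def restr {N : ℕ} (K : Finset (Fin N)) (v : Fin N → ℝ) : Fin N → ℝ :=
  fun n => if n ∈ K then v n else 0

lemma restr_sub {N : ℕ} (K : Finset (Fin N)) (v w : Fin N → ℝ) :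
    restr K (v - w) = restr K v - restr K w := by
  funext n
  by_cases hn : n ∈ K <;> simp [restr, hn]

lemma apply_sub_le_add_of_subadditive {E : Type*} [AddGroup E] {p : E → ℝ}
    (hadd : ∀ v w, p (v + w) ≤ p v + p w) (hneg : ∀ v, p (-v) = p v) (v w : E) :
    p (v - w) ≤ p v + p w := by
  simpa [sub_eq_add_neg, hneg] using hadd v (-w)

lemma tail_sub_le_two_mul_tail {N : ℕ} (K : Finset (Fin N)) {p : (Fin N → ℝ) → ℝ}
    (hadd : ∀ v w, p (v + w) ≤ p v + p w) (hneg : ∀ v, p (-v) = p v) {v z : Fin N → ℝ}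
    (hz : p (z - restr K z) ≤ p (v - restr K v)) :
    p ((v - z) - restr K (v - z)) ≤ 2 * p (v - restr K v) := by
  have hsplit : (v - z) - restr K (v - z) = (v - restr K v) - (z - restr K z) := by
    rw [restr_sub]; abel
  calc p ((v - z) - restr K (v - z)) = p ((v - restr K v) - (z - restr K z)) := by rw [hsplit]
    _ ≤ p (v - restr K v) + p (z - restr K z) := apply_sub_le_add_of_subadditive hadd hneg _ _
    _ ≤ 2 * p (v - restr K v) := by linarith

theorem stmt7_general {Ω : Type} [MeasureSpace Ω]
    {N M : ℕ} (x : Ω → Fin N → ℝ) (Φ : Matrix (Fin M) (Fin N) ℝ)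
    (K : Finset (Fin N)) (nX : (Fin N → ℝ) → ℝ)
    (hnX0 : ∀ v, 0 ≤ nX v) (hnXadd : ∀ v w, nX (v + w) ≤ nX v + nX w)
    (hnXneg : ∀ v, nX (-v) = nX v)
    (C₀ : ℝ) (hC₀ : 0 ≤ C₀)
    (Δ : (Fin M → ℝ) → (Fin N → ℝ))
    -- Δ is the argmin decoder: Δ(Φ v) minimizes ‖z − z_K‖_X over feasible z
    (hmin : ∀ v z : Fin N → ℝ, Φ.mulVec z = Φ.mulVec v →
      nX (Δ (Φ.mulVec v) - restr K (Δ (Φ.mulVec v))) ≤ nX (z - restr K z))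
    -- null space property in expectation with constant C₀/2
    (hNSP : ∫ ω, nX (x ω - Δ (Φ.mulVec (x ω))) ≤
      (C₀ / 2) * ∫ ω, nX ((x ω - Δ (Φ.mulVec (x ω))) - restr K (x ω - Δ (Φ.mulVec (x ω)))))
    (hint1 : Integrable (fun ω => nX (x ω - restr K (x ω)))) :
    -- instance optimality in expectation with constant C₀
    ∫ ω, nX (x ω - Δ (Φ.mulVec (x ω))) ≤ C₀ * ∫ ω, nX (x ω - restr K (x ω)) := by
  have hpointwise : ∀ ω, nX ((x ω - Δ (Φ.mulVec (x ω))) - restr K (x ω - Δ (Φ.mulVec (x ω)))) ≤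
      2 * nX (x ω - restr K (x ω)) := fun ω =>
    tail_sub_le_two_mul_tail K hnXadd hnXneg (hmin (x ω) (x ω) rfl)
  have hexpected : ∫ ω, nX ((x ω - Δ (Φ.mulVec (x ω))) - restr K (x ω - Δ (Φ.mulVec (x ω)))) ≤
      2 * ∫ ω, nX (x ω - restr K (x ω)) := by
    rw [← integral_const_mul]
    exact integral_mono_of_nonneg (ae_of_all _ fun ω => hnX0 _) (hint1.const_mul 2)
      (ae_of_all _ hpointwise)
  calc ∫ ω, nX (x ω - Δ (Φ.mulVec (x ω))) ≤ _ := hNSP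
    _ ≤ (C₀ / 2) * (2 * ∫ ω, nX (x ω - restr K (x ω))) := by gcongr
    _ = C₀ * ∫ ω, nX (x ω - restr K (x ω)) := by ring

theorem stmt7 {Ω : Type} [MeasureSpace Ω] [IsProbabilityMeasure (volume : Measure Ω)]
    {N M : ℕ} (x : Ω → Fin N → ℝ) (Φ : Matrix (Fin M) (Fin N) ℝ)
    (K : Finset (Fin N)) (nX : (Fin N → ℝ) → ℝ)
    (hnX0 : ∀ v, 0 ≤ nX v) (hnXadd : ∀ v w, nX (v + w) ≤ nX v + nX w)
    (hnXneg : ∀ v, nX (-v) = nX v)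
    (C₀ : ℝ) (hC₀ : 0 ≤ C₀)
    (Δ : (Fin M → ℝ) → (Fin N → ℝ))
    -- Δ is consistent: Φ(Δ(Φ v)) = Φ v
    (hcons : ∀ v : Fin N → ℝ, Φ.mulVec (Δ (Φ.mulVec v)) = Φ.mulVec v)
    -- Δ is the argmin decoder: Δ(Φ v) minimizes ‖z − z_K‖_X over feasible z
    (hmin : ∀ v z : Fin N → ℝ, Φ.mulVec z = Φ.mulVec v →
      nX (Δ (Φ.mulVec v) - restr K (Δ (Φ.mulVec v))) ≤ nX (z - restr K z))
    -- null space property in expectation with constant C₀/2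
    (hNSP : ∫ ω, nX (x ω - Δ (Φ.mulVec (x ω))) ≤
      (C₀ / 2) * ∫ ω, nX ((x ω - Δ (Φ.mulVec (x ω))) - restr K (x ω - Δ (Φ.mulVec (x ω)))))
    (hint1 : Integrable (fun ω => nX (x ω - restr K (x ω))))
    (hint2 : Integrable (fun ω => nX (Δ (Φ.mulVec (x ω)) - restr K (Δ (Φ.mulVec (x ω)))))) :
    -- instance optimality in expectation with constant C₀
    ∫ ω, nX (x ω - Δ (Φ.mulVec (x ω))) ≤ C₀ * ∫ ω, nX (x ω - restr K (x ω)) :=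
  stmt7_general x Φ K nX hnX0 hnXadd hnXneg C₀ hC₀ Δ hmin hNSP hint1
end

section
/- Let η ∈ ℝ^N satisfy Φη = 0, where Φ has the linear RIP of order 2k with constant δ < 1 over the consecutive blocks K = {1,…,k}, K₁ = {k+1,…,2k}, etc. If moreover for each j the block norms satisfy ‖η_{K_{j+1}}‖₁ ≤ ‖η_{K_j}‖₁, then ‖η‖₁ ≤ (1 + k^{1/2}·(1+δ)/(1−δ))·‖η_{K^C}‖₁, where K^C = {k+1,…,N}. -/
open Matrix

noncomputable def l2 {N : ℕ} (v : Fin N → ℝ) : ℝ := Real.sqrt (∑ n, v n ^ 2)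

def l1 {N : ℕ} (v : Fin N → ℝ) : ℝ := ∑ n, |v n|

/-- Restriction of a vector to the `j`-th consecutive block of size `k`. -/
def blockRestr {N : ℕ} (k j : ℕ) (v : Fin N → ℝ) : Fin N → ℝ :=
  fun n => if j * k ≤ (n : ℕ) ∧ (n : ℕ) < (j + 1) * k then v n else 0

/-! Write `B j` for the `j`-th block of `η`. Since `Φ η = 0`, `Φ (B 0 + B 1) = -∑_{j ≥ 2} Φ (B j)`,
so the lower RIP bound on `K ∪ K₁` and the upper RIP bound on each later block give
`(1 - δ) ‖B 0 + B 1‖₂ ≤ (1 + δ) ∑_{j ≥ 2} ‖B j‖₂ ≤ (1 + δ) ‖η_{Kᶜ}‖₁`.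
Cauchy–Schwarz on the `k` coordinates of `K` gives `‖η_K‖₁ ≤ √k ‖B 0‖₂ ≤ √k ‖B 0 + B 1‖₂`,
and `‖η‖₁ = ‖η_K‖₁ + ‖η_{Kᶜ}‖₁`. -/

open Finset

lemma l1_nonneg {N : ℕ} (v : Fin N → ℝ) : 0 ≤ l1 v :=
  sum_nonneg fun _ _ => abs_nonneg _

lemma l2_eq_norm {N : ℕ} (v : Fin N → ℝ) : l2 v = ‖WithLp.toLp 2 v‖ := by
  simp [l2, EuclideanSpace.norm_eq, sq_abs]

lemma l2_neg {N : ℕ} (v : Fin N → ℝ) : l2 (-v) = l2 v := by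
  simp [l2]

lemma l2_sum_le {N : ℕ} {ι : Type*} (s : Finset ι) (f : ι → Fin N → ℝ) :
    l2 (∑ j ∈ s, f j) ≤ ∑ j ∈ s, l2 (f j) := by
  simpa only [l2_eq_norm, WithLp.toLp_sum] using norm_sum_le s fun j => WithLp.toLp 2 (f j)

lemma l2_nonneg {N : ℕ} (v : Fin N → ℝ) : 0 ≤ l2 v :=
  Real.sqrt_nonneg _

lemma l2_le_l1 {N : ℕ} (v : Fin N → ℝ) : l2 v ≤ l1 v := by
  refine Real.sqrt_le_iff.2 ⟨l1_nonneg v, ?_⟩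
  simpa [l1, sq_abs] using sum_sq_le_sq_sum_of_nonneg (s := univ) fun n _ => abs_nonneg (v n)

lemma l2_le_l2_of_abs_le {N : ℕ} {v w : Fin N → ℝ} (h : ∀ n, |v n| ≤ |w n|) : l2 v ≤ l2 w :=
  Real.sqrt_le_sqrt <| sum_le_sum fun n _ => sq_le_sq.2 (h n)

lemma l1_le_sqrt_card_mul_l2 {N : ℕ} {v : Fin N → ℝ} (s : Finset (Fin N))
    (hv : ∀ n ∉ s, v n = 0) : l1 v ≤ √(#s) * l2 v := by
  have hl1 : l1 v = ∑ n ∈ s, |v n| :=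
    (sum_subset (subset_univ s) fun n _ hn => by simp [hv n hn]).symm
  have hl2 : ∑ n ∈ s, |v n| ^ 2 = ∑ n, v n ^ 2 := by
    simp_rw [sq_abs]
    exact sum_subset (subset_univ s) fun n _ hn => by simp [hv n hn]
  rw [l2, ← Real.sqrt_mul (Nat.cast_nonneg _), Real.le_sqrt (l1_nonneg v)
    (mul_nonneg (Nat.cast_nonneg _) (sum_nonneg fun _ _ => sq_nonneg _)), hl1, ← hl2]
  exact sq_sum_le_card_mul_sum_sq

lemma one_sub_mul_l2_le_one_add_mul_sum_l1 {M N : ℕ} {ι : Type*} {Φ : Matrix (Fin M) (Fin N) ℝ}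
    {δ : ℝ} (hδ : 0 ≤ 1 + δ) {x : Fin N → ℝ} {s : Finset ι} {B : ι → Fin N → ℝ}
    (hker : Φ *ᵥ (x + ∑ j ∈ s, B j) = 0) (hlow : (1 - δ) * l2 x ≤ l2 (Φ *ᵥ x))
    (hup : ∀ j ∈ s, l2 (Φ *ᵥ B j) ≤ (1 + δ) * l2 (B j)) :
    (1 - δ) * l2 x ≤ (1 + δ) * ∑ j ∈ s, l1 (B j) := by
  have hΦx : Φ *ᵥ x = -∑ j ∈ s, Φ *ᵥ B j := by
    rw [← mulVec_sum]
    exact eq_neg_of_add_eq_zero_left (by rwa [← mulVec_add])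
  calc (1 - δ) * l2 x ≤ l2 (Φ *ᵥ x) := hlow
    _ ≤ ∑ j ∈ s, l2 (Φ *ᵥ B j) := by rw [hΦx, l2_neg]; exact l2_sum_le s _
    _ ≤ ∑ j ∈ s, (1 + δ) * l1 (B j) :=
        sum_le_sum fun j hj => (hup j hj).trans (mul_le_mul_of_nonneg_left (l2_le_l1 _) hδ)
    _ = (1 + δ) * ∑ j ∈ s, l1 (B j) := (mul_sum _ _ _).symm

section Blocks

variable {N k : ℕ}

lemma blockRestr_apply (hk : 0 < k) (j : ℕ) (v : Fin N → ℝ) (n : Fin N) :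
    blockRestr k j v n = if (n : ℕ) / k = j then v n else 0 := by
  simp only [blockRestr, Nat.div_eq_iff hk, add_mul, one_mul]
  split_ifs <;> first | rfl | omega

lemma blockRestr_eq_zero {j : ℕ} (v : Fin N → ℝ) {n : Fin N}
    (hn : (n : ℕ) < j * k ∨ (j + 1) * k ≤ n) : blockRestr k j v n = 0 :=
  if_neg (by omega)

lemma blockRestr_eq_zero_of_outside_pair {j : ℕ} (v : Fin N → ℝ) {n : Fin N}
    (hn : (n : ℕ) < j * k ∨ (j + 2) * k ≤ n) : blockRestr k j v n = 0 :=
  blockRestr_eq_zero v (hn.imp_right (Nat.mul_le_mul_right k (by omega)).trans)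

lemma blockRestr_add_succ_eq_zero_of_outside_pair {j : ℕ} (v : Fin N → ℝ) {n : Fin N}
    (hn : (n : ℕ) < j * k ∨ (j + 2) * k ≤ n) :
    (blockRestr k j v + blockRestr k (j + 1) v) n = 0 := by
  have hmono : j * k ≤ (j + 1) * k := Nat.mul_le_mul_right k (by omega)
  have hsucc : (j + 1 + 1) * k = (j + 2) * k := rfl
  rw [Pi.add_apply, blockRestr_eq_zero_of_outside_pair v hn, blockRestr_eq_zero v (by omega),
    add_zero]

lemma sum_range_blockRestr (hk : 0 < k) (v : Fin N → ℝ) {m : ℕ} (hm : N ≤ m) :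
    ∑ j ∈ range m, blockRestr k j v = v := by
  ext n
  have hn : (n : ℕ) / k < m := (Nat.div_le_self _ _).trans_lt (n.2.trans_le hm)
  simp [Finset.sum_apply, blockRestr_apply hk, hn]

lemma sum_Ico_l1_blockRestr_le (hk : 0 < k) (v : Fin N → ℝ) {a : ℕ} (b : ℕ) (ha : 1 ≤ a) :
    ∑ j ∈ Ico a b, l1 (blockRestr k j v) ≤ l1 (fun n => if k ≤ (n : ℕ) then v n else 0) := by
  simp only [l1]
  rw [sum_comm]
  refine sum_le_sum fun n _ => ?_
  simp only [blockRestr_apply hk, apply_ite abs, abs_zero, sum_ite_eq, mem_Ico]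
  split_ifs with hj hn
  · exact le_rfl
  · exact absurd ((Nat.one_le_div_iff hk).1 (ha.trans hj.1)) hn
  · exact abs_nonneg _
  · exact le_rfl

lemma l1_eq_l1_blockRestr_zero_add (v : Fin N → ℝ) :
    l1 v = l1 (blockRestr k 0 v) + l1 (fun n => if k ≤ (n : ℕ) then v n else 0) := by
  simp only [l1, ← sum_add_distrib, blockRestr]
  refine sum_congr rfl fun n _ => ?_
  split_ifs <;> simp <;> omega

lemma l2_blockRestr_le_l2_add_succ (j : ℕ) (v : Fin N → ℝ) :
    l2 (blockRestr k j v) ≤ l2 (blockRestr k j v + blockRestr k (j + 1) v) := by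
  refine l2_le_l2_of_abs_le fun n => ?_
  simp only [blockRestr, Pi.add_apply]
  split_ifs <;> first | omega | simp

lemma l1_blockRestr_le_sqrt_mul_l2 (j : ℕ) (v : Fin N → ℝ) :
    l1 (blockRestr k j v) ≤ √k * l2 (blockRestr k j v) := by
  set s := univ.filter fun n : Fin N => j * k ≤ (n : ℕ) ∧ (n : ℕ) < (j + 1) * k
  have hs : #s ≤ k := by
    calc #s = #(s.map Fin.valEmbedding) := (card_map _).symm
      _ ≤ #(Ico (j * k) ((j + 1) * k)) := card_le_card fun x hx => by
          obtain ⟨a, ha, rfl⟩ := by simpa [s] using hx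
          exact mem_Ico.2 ha
      _ = k := by simp [add_mul]
  refine (l1_le_sqrt_card_mul_l2 s fun n hn => if_neg (by simpa [s] using hn)).trans ?_
  exact mul_le_mul_of_nonneg_right (Real.sqrt_le_sqrt (by exact_mod_cast hs)) (l2_nonneg _)

end Blocks

theorem stmt9_general {M N k : ℕ} (hk : 0 < k) (δ : ℝ) (hδ0 : 0 ≤ δ) (hδ : δ < 1)
    (Φ : Matrix (Fin M) (Fin N) ℝ)
    -- linear RIP of order 2k: the RIP bounds hold on every pair of consecutive blocks of size k
    (hRIP : ∀ v : Fin N → ℝ,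
      (∃ j : ℕ, ∀ n : Fin N, ((n : ℕ) < j * k ∨ (j + 2) * k ≤ (n : ℕ)) → v n = 0) →
      (1 - δ) * l2 v ≤ l2 (Φ.mulVec v) ∧ l2 (Φ.mulVec v) ≤ (1 + δ) * l2 v)
    (η : Fin N → ℝ) (hη : Φ.mulVec η = 0) :
    l1 η ≤ (1 + Real.sqrt k * (1 + δ) / (1 - δ)) *
      l1 (fun n => if k ≤ (n : ℕ) then η n else 0) := by
  set B := fun j => blockRestr k j η
  set T := l1 (fun n : Fin N => if k ≤ (n : ℕ) then η n else 0)
  have hker : Φ *ᵥ (B 0 + B 1 + ∑ j ∈ Ico 2 (N + 2), B j) = 0 := by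
    have hsum : ∑ j ∈ range (N + 2), B j = η := sum_range_blockRestr hk η (by omega)
    rw [← sum_range_add_sum_Ico _ (by omega : 2 ≤ N + 2), sum_range_succ, sum_range_one] at hsum
    rwa [hsum]
  have hhead : (1 - δ) * l2 (B 0 + B 1) ≤ (1 + δ) * T :=
    (one_sub_mul_l2_le_one_add_mul_sum_l1 (by linarith) hker
      (hRIP _ ⟨0, fun n => blockRestr_add_succ_eq_zero_of_outside_pair η⟩).1
      fun j _ => (hRIP _ ⟨j, fun n => blockRestr_eq_zero_of_outside_pair η⟩).2).trans
    (mul_le_mul_of_nonneg_left (sum_Ico_l1_blockRestr_le hk η _ one_le_two) (by linarith))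
  have hB0 : l1 (B 0) ≤ √k * ((1 + δ) * T / (1 - δ)) :=
    (l1_blockRestr_le_sqrt_mul_l2 0 η).trans <| mul_le_mul_of_nonneg_left
      ((l2_blockRestr_le_l2_add_succ 0 η).trans ((le_div_iff₀ (by linarith)).2 (by linarith)))
      (Real.sqrt_nonneg _)
  calc l1 η = l1 (B 0) + T := l1_eq_l1_blockRestr_zero_add η
    _ ≤ T + √k * ((1 + δ) * T / (1 - δ)) := by linarith
    _ = _ := by ring

theorem stmt9 {M N k : ℕ} (hk : 0 < k) (δ : ℝ) (hδ0 : 0 ≤ δ) (hδ : δ < 1)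
    (Φ : Matrix (Fin M) (Fin N) ℝ)
    -- linear RIP of order 2k: the RIP bounds hold on every pair of consecutive blocks of size k
    (hRIP : ∀ v : Fin N → ℝ,
      (∃ j : ℕ, ∀ n : Fin N, ((n : ℕ) < j * k ∨ (j + 2) * k ≤ (n : ℕ)) → v n = 0) →
      (1 - δ) * l2 v ≤ l2 (Φ.mulVec v) ∧ l2 (Φ.mulVec v) ≤ (1 + δ) * l2 v)
    (η : Fin N → ℝ) (hη : Φ.mulVec η = 0)
    -- block ℓ¹ norms decay
    (hdecay : ∀ j : ℕ, l1 (blockRestr k (j + 1) η) ≤ l1 (blockRestr k j η)) :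
    l1 η ≤ (1 + Real.sqrt k * (1 + δ) / (1 - δ)) *
      l1 (fun n => if k ≤ (n : ℕ) then η n else 0) :=
  stmt9_general hk δ hδ0 hδ Φ hRIP η hη
end
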